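/- Let A be an n×n row-stochastic matrix having a strictly positive left-invariant vector (πA = π with all πᵢ > 0) and no transient states. If det(I − A^{∨2}) ≠ 0, then A is irreducible and aperiodic; consequently the Markov chain with transition matrix A is ergodic. -/

import Mathlib

/-!
A reducible or periodic chain admits a nonconstant labelling `c` of the states and an injective
`σ` with `c k = σ (c i)` along every transition `i → k`: reachability from a fixed state with
`σ = id` (reachability is symmetric since there are no transient states), or the length of a walk
from a fixed state modulo the period with `σ = (· + 1)`. Any such labelling yields a nonzero fixed
vector of `A^{∨2}`, so `det (I - A^{∨2}) = 0`.

An irreducible aperiodic chain is primitive (the return times to a state form a numerical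
semigroup of gcd one), and a power `A^N` with all entries at least `δ > 0` contracts the `ℓ¹` norm
of vectors of total mass zero by `1 - nδ`; applied to `eᵢ - π` this gives `Aᵏ → 1 π`.
-/

open Matrix BigOperators Filter

/-- Index set of pairs `(i,j)` with `i < j`. -/
abbrev Pairs (n : ℕ) := {p : Fin n × Fin n // p.1 < p.2}

/-- Zeon second power: matrix of 2×2 permanents. -/
def zeonSq {n : ℕ} {R : Type*} [CommRing R] (A : Matrix (Fin n) (Fin n) R) :
    Matrix (Pairs n) (Pairs n) R :=
  Matrix.of fun I J =>
    A I.1.1 J.1.1 * A I.1.2 J.1.2 + A I.1.1 J.1.2 * A I.1.2 J.1.1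

/-- `Mat(X)`: symmetric matrix with zero diagonal built from a vector indexed by pairs. -/
def matOf {n : ℕ} {R : Type*} [CommRing R] (X : Pairs n → R) :
    Matrix (Fin n) (Fin n) R :=
  Matrix.of fun i j =>
    if h : i < j then X ⟨(i, j), h⟩ else if h' : j < i then X ⟨(j, i), h'⟩ else 0

open Finset Topology

section ZeonSquare

variable {n : ℕ}

theorem sum_pairs_add_swap {M : Type*} [AddCommMonoid M] (g : Fin n × Fin n → M)
    (hg : ∀ i, g (i, i) = 0) :
    ∑ I : Pairs n, (g I.1 + g I.1.swap) = ∑ p, g p := by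
  rw [← Finset.sum_subtype (univ.filter fun p : Fin n × Fin n => p.1 < p.2) (by simp)
    (fun p => g p + g p.swap), sum_add_distrib,
    ← sum_filter_add_sum_filter_not univ (fun p : Fin n × Fin n => p.1 < p.2) g]
  congr 1
  rw [← sum_filter_add_sum_filter_not (univ.filter fun p : Fin n × Fin n => ¬p.1 < p.2)
    (fun p => p.2 < p.1) g, filter_filter, filter_filter]
  have hdiag : ∑ p ∈ univ.filter (fun p : Fin n × Fin n => ¬p.1 < p.2 ∧ ¬p.2 < p.1), g p = 0 :=
    sum_eq_zero fun p hp => by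
      obtain ⟨a, b⟩ := p
      obtain rfl : a = b := by simp only [mem_filter] at hp; omega
      exact hg a
  rw [hdiag, add_zero]
  exact sum_nbij' Prod.swap Prod.swap (by simpa using fun _ _ h => ⟨h.le, h⟩) (by simp) (by simp)
    (by simp) (by simp)

variable {R : Type*} [CommRing R]

theorem matOf_apply_of_lt (X : Pairs n → R) {i j : Fin n} (h : i < j) :
    matOf X i j = X ⟨(i, j), h⟩ := by
  simp [matOf, h]

theorem matOf_apply_of_gt (X : Pairs n → R) {i j : Fin n} (h : j < i) :
    matOf X i j = X ⟨(j, i), h⟩ := by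
  simp [matOf, h, not_lt.2 h.le]

theorem matOf_apply_self (X : Pairs n → R) (i : Fin n) : matOf X i i = 0 := by
  simp [matOf]

theorem matOf_eq_of_symm (f : Fin n → Fin n → R) (hsymm : ∀ i j, f i j = f j i)
    (hdiag : ∀ i, f i i = 0) : matOf (fun I => f I.1.1 I.1.2) = Matrix.of f := by
  ext i j
  rcases lt_trichotomy i j with h | rfl | h
  · simp [matOf_apply_of_lt _ h]
  · simp [matOf_apply_self, hdiag]
  · simp [matOf_apply_of_gt _ h, hsymm i j]

theorem vecMul_zeonSq_apply (X : Pairs n → R) (A : Matrix (Fin n) (Fin n) R) (J : Pairs n) :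
    (X ᵥ* zeonSq A) J = (Aᵀ * matOf X * A) J.1.1 J.1.2 := by
  simp only [mul_apply, transpose_apply, sum_mul]
  rw [sum_comm, ← Fintype.sum_prod_type' (f := fun i j => A i J.1.1 * matOf X i j * A j J.1.2),
    ← sum_pairs_add_swap _ (by simp [matOf_apply_self])]
  refine sum_congr rfl fun I _ => ?_
  simp only [zeonSq, of_apply, Prod.fst_swap, Prod.snd_swap, matOf_apply_of_lt X I.2,
    matOf_apply_of_gt X I.2]
  ring

end ZeonSquare

/-- `X_{ij} = [c i ≠ c j] π_i π_j` is a nonzero left fixed vector of `A^{∨2}`: whenever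
`A_{ik} A_{jl} ≠ 0`, the labels satisfy `c k = c l ↔ c i = c j`. -/
theorem det_one_sub_zeonSq_eq_zero_of_labelling {n : ℕ} {K β : Type*} [Field K]
    {A : Matrix (Fin n) (Fin n) K} {π : Fin n → K} (hπ : ∀ i, π i ≠ 0) (hinv : π ᵥ* A = π)
    (c : Fin n → β) {σ : β → β} (hσ : σ.Injective) (hc : ∀ i k, A i k ≠ 0 → c k = σ (c i))
    (hne : ∃ i j, c i ≠ c j) :
    (1 - zeonSq A).det = 0 := by
  classical
  set f : Fin n → Fin n → K := fun i j => if c i = c j then 0 else π i * π j with hf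
  set X : Pairs n → K := fun I => f I.1.1 I.1.2
  have hterm : ∀ i j k l,
      A i k * f i j * A j l = (π i * A i k) * (π j * A j l) * if c k = c l then 0 else 1 := by
    intro i j k l
    by_cases hik : A i k = 0
    · simp [hik]
    by_cases hjl : A j l = 0
    · simp [hjl]
    simp only [hf, hc i k hik, hc j l hjl, hσ.eq_iff]
    split_ifs <;> ring
  have hfix : Aᵀ * Matrix.of f * A = Matrix.of f := by
    ext k l
    have hcol : ∀ k, ∑ i, π i * A i k = π k := fun k => congrFun hinv k
    simp only [mul_apply, transpose_apply, of_apply, sum_mul, hterm]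
    rw [sum_comm]
    simp only [← sum_mul, ← mul_sum, hcol, hf]
    split_ifs <;> ring
  have hX : X ᵥ* zeonSq A = X := by
    funext J
    rw [vecMul_zeonSq_apply, matOf_eq_of_symm f (fun i j => by simp only [hf, eq_comm, mul_comm])
      (fun i => by simp [hf]), hfix, of_apply]
  have hX0 : X ≠ 0 := by
    obtain ⟨i, j, hij⟩ := hne
    intro h0
    rcases (show i ≠ j by rintro rfl; exact hij rfl).lt_or_gt with h | h
    · simpa [X, hf, hij, hπ] using congrFun h0 ⟨(i, j), h⟩
    · simpa [X, hf, Ne.symm hij, hπ] using congrFun h0 ⟨(j, i), h⟩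
  exact exists_vecMul_eq_zero_iff.mp ⟨X, hX0, by rw [vecMul_sub, vecMul_one, hX, sub_self]⟩

section Walks

theorem pow_one_apply_pos {ι R : Type*} [Fintype ι] [DecidableEq ι] [Semiring R] [PartialOrder R]
    {A : Matrix ι ι R} (hA : ∀ i j, 0 ≤ A i j) {i j : ι} (h : A i j ≠ 0) : 0 < (A ^ 1) i j := by
  simpa using (hA i j).lt_of_ne' h

variable {ι R : Type*} [Fintype ι] [DecidableEq ι] [Ring R] [LinearOrder R] [IsStrictOrderedRing R]
  {A : Matrix ι ι R}

theorem pow_add_apply_pos (hA : ∀ i j, 0 ≤ A i j) {a b : ℕ} {i k j : ι}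
    (h₁ : 0 < (A ^ a) i k) (h₂ : 0 < (A ^ b) k j) : 0 < (A ^ (a + b)) i j := by
  rw [pow_add, mul_apply]
  exact (sum_pos_iff_of_nonneg fun x _ =>
    mul_nonneg (pow_apply_nonneg hA a i x) (pow_apply_nonneg hA b x j)).2
    ⟨k, mem_univ k, mul_pos h₁ h₂⟩

theorem natCast_eq_of_pow_apply_pos (hA : ∀ i j, 0 ≤ A i j)
    (hirr : ∀ i j, ∃ m, 0 < (A ^ m) i j) {d : ℕ} (hd : ∀ m i, 0 < (A ^ m) i i → d ∣ m)
    {i j : ι} {a b : ℕ} (ha : 0 < (A ^ a) i j) (hb : 0 < (A ^ b) i j) :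
    (a : ZMod d) = b := by
  obtain ⟨c, hc⟩ := hirr j i
  have hac := (ZMod.natCast_eq_zero_iff _ d).2 (hd _ i (pow_add_apply_pos hA ha hc))
  have hbc := (ZMod.natCast_eq_zero_iff _ d).2 (hd _ i (pow_add_apply_pos hA hb hc))
  push_cast at hac hbc
  linear_combination hac - hbc

end Walks

section DetNeZero

variable {n : ℕ} {K : Type*} [Field K] [LinearOrder K] [IsStrictOrderedRing K]
  {A : Matrix (Fin n) (Fin n) K} {π : Fin n → K}

theorem exists_pow_apply_pos_of_det_ne_zero (hA : ∀ i j, 0 ≤ A i j) (hπ : ∀ i, 0 < π i)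
    (hinv : π ᵥ* A = π)
    (hnotrans : ∀ i j, (∃ m, 0 < (A ^ m) i j) → ∃ m, 0 < (A ^ m) j i)
    (hdet : (1 - zeonSq A).det ≠ 0) :
    ∀ i j, ∃ m, 0 < (A ^ m) i j := by
  by_contra! ⟨i₀, j₀, hj₀⟩
  have hreach₀ : ∃ m, 0 < (A ^ m) i₀ i₀ := ⟨0, by simp⟩
  refine hdet (det_one_sub_zeonSq_eq_zero_of_labelling (fun i => (hπ i).ne') hinv
    (fun i => ∃ m, 0 < (A ^ m) i₀ i) Function.injective_id (fun i k hik => ?_)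
    ⟨i₀, j₀, fun h => ?_⟩)
  · have hik := pow_one_apply_pos hA hik
    obtain ⟨m', hki⟩ := hnotrans i k ⟨1, hik⟩
    exact propext ⟨fun ⟨m, hm⟩ => ⟨m + m', pow_add_apply_pos hA hm hki⟩,
      fun ⟨m, hm⟩ => ⟨m + 1, pow_add_apply_pos hA hm hik⟩⟩
  · obtain ⟨m, hm⟩ : ∃ m, 0 < (A ^ m) i₀ j₀ := h ▸ hreach₀
    exact (hj₀ m).not_gt hm

theorem aperiodic_of_det_ne_zero [Nonempty (Fin n)] (hA : ∀ i j, 0 ≤ A i j)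
    (hπ : ∀ i, 0 < π i) (hinv : π ᵥ* A = π) (hirr : ∀ i j, ∃ m, 0 < (A ^ m) i j)
    (hdet : (1 - zeonSq A).det ≠ 0) :
    ∀ d : ℕ, (∀ m, 0 < m → (∃ i, 0 < (A ^ m) i i) → d ∣ m) → d = 1 := by
  intro d hd
  by_contra hd1
  have hd' : ∀ m i, 0 < (A ^ m) i i → d ∣ m := fun m i h =>
    m.eq_zero_or_pos.elim (fun hm => hm ▸ dvd_zero d) (fun hm => hd m hm ⟨i, h⟩)
  obtain ⟨k₀⟩ := ‹Nonempty (Fin n)›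
  obtain ⟨i₀, -, hi₀⟩ := exists_ne_zero_of_sum_ne_zero
    (show ∑ i, π i * A i k₀ ≠ 0 from (congrFun hinv k₀).trans_ne (hπ k₀).ne')
  have hedge : A i₀ k₀ ≠ 0 := right_ne_zero_of_mul hi₀
  let phase : Fin n → ZMod d := fun i => ((hirr i₀ i).choose : ℕ)
  have hphase : ∀ i k, A i k ≠ 0 → phase k = phase i + 1 := fun i k hik => by
    simpa using natCast_eq_of_pow_apply_pos hA hirr hd' (hirr i₀ k).choose_spec
      (pow_add_apply_pos hA (hirr i₀ i).choose_spec (pow_one_apply_pos hA hik))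
  refine hdet (det_one_sub_zeonSq_eq_zero_of_labelling (fun i => (hπ i).ne') hinv phase
    (add_left_injective 1) hphase ⟨i₀, k₀, fun h => ?_⟩)
  rw [hphase i₀ k₀ hedge, left_eq_add, ZMod.one_eq_zero_iff] at h
  exact hd1 h

end DetNeZero

section Primitive

variable {ι R : Type*} [Fintype ι] [DecidableEq ι] [Ring R] [LinearOrder R] [IsStrictOrderedRing R]
  {A : Matrix ι ι R}

theorem eventually_pow_apply_self_pos (hA : ∀ i j, 0 ≤ A i j)
    (hirr : ∀ i j, ∃ m, 0 < (A ^ m) i j)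
    (haper : ∀ d : ℕ, (∀ m, 0 < m → (∃ i, 0 < (A ^ m) i i) → d ∣ m) → d = 1) (i : ι) :
    ∀ᶠ m in atTop, 0 < (A ^ m) i i := by
  set S : Set ℕ := {m | 0 < (A ^ m) i i}
  have hgcd : Nat.setGcd S = 1 := haper _ fun m _ ⟨j, hj⟩ => by
    obtain ⟨p, hp⟩ := hirr i j
    obtain ⟨q, hq⟩ := hirr j i
    have hpq := Nat.setGcd_dvd_of_mem (s := S) (pow_add_apply_pos hA hp hq)
    have hpmq := Nat.setGcd_dvd_of_mem (s := S)
      (pow_add_apply_pos hA (pow_add_apply_pos hA hp hj) hq)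
    exact (Nat.dvd_add_right hpq).mp (by rwa [add_right_comm] at hpmq)
  obtain ⟨N, hN⟩ := Nat.exists_mem_closure_of_ge S
  refine eventually_atTop.2 ⟨N, fun m hm => ?_⟩
  exact AddSubmonoid.closure_induction (fun _ h => h) (by simp)
    (fun _ _ _ _ ha hb => pow_add_apply_pos hA ha hb) (hN m hm (hgcd ▸ one_dvd m))

theorem isPrimitive_of_aperiodic (hA : ∀ i j, 0 ≤ A i j) (hirr : ∀ i j, ∃ m, 0 < (A ^ m) i j)
    (haper : ∀ d : ℕ, (∀ m, 0 < m → (∃ i, 0 < (A ^ m) i i) → d ∣ m) → d = 1) :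
    A.IsPrimitive := by
  have hpos : ∀ i j, ∀ᶠ m in atTop, 0 < (A ^ m) i j := fun i j => by
    obtain ⟨p, hp⟩ := hirr i j
    filter_upwards [(tendsto_sub_atTop_nat p).eventually
      (eventually_pow_apply_self_pos hA hirr haper i), eventually_ge_atTop p] with m hm hpm
    simpa [Nat.sub_add_cancel hpm] using pow_add_apply_pos hA hm hp
  obtain ⟨N, hN, hN0⟩ := ((eventually_all.2 fun i => eventually_all.2 (hpos i)).and
    (eventually_gt_atTop 0)).exists
  exact ⟨hA, N, hN0, hN⟩

end Primitive

theorem sum_vecMul_of_mem_rowStochastic {ι R : Type*} [Fintype ι] [DecidableEq ι] [CommSemiring R]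
    [PartialOrder R] [IsOrderedRing R] {P : Matrix ι ι R} (hP : P ∈ rowStochastic R ι) (v : ι → R) :
    ∑ j, (v ᵥ* P) j = ∑ i, v i := by
  rw [← dotProduct_one, ← dotProduct_one, ← dotProduct_mulVec, one_vecMul_of_mem_rowStochastic hP]

section AbsSum

variable {ι R : Type*} [Fintype ι] [CommRing R] [LinearOrder R] [IsStrictOrderedRing R]

theorem sum_abs_vecMul_le_of_sum_row_eq {Q : Matrix ι ι R} (hQ : ∀ i j, 0 ≤ Q i j) {s : R}
    (hs : ∀ i, ∑ j, Q i j = s) (v : ι → R) :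
    ∑ j, |(v ᵥ* Q) j| ≤ s * ∑ i, |v i| :=
  calc ∑ j, |(v ᵥ* Q) j| ≤ ∑ j, ∑ i, |v i| * Q i j :=
        sum_le_sum fun j _ => (abs_sum_le_sum_abs _ _).trans_eq <|
          sum_congr rfl fun i _ => by rw [abs_mul, abs_of_nonneg (hQ i j)]
    _ = s * ∑ i, |v i| := by
        rw [sum_comm, mul_sum]
        exact sum_congr rfl fun i _ => by rw [← mul_sum, hs, mul_comm]

variable [DecidableEq ι]

theorem sum_abs_vecMul_le {P : Matrix ι ι R} (hP : P ∈ rowStochastic R ι) (v : ι → R) :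
    ∑ j, |(v ᵥ* P) j| ≤ ∑ i, |v i| := by
  simpa using sum_abs_vecMul_le_of_sum_row_eq (fun i j => nonneg_of_mem_rowStochastic hP)
    (sum_row_of_mem_rowStochastic hP) v

/-- Since `v` has total mass zero, subtracting the constant `δ` from `P` does not change
`v ᵥ* P`. -/
theorem sum_abs_vecMul_le_of_le {P : Matrix ι ι R} (hP : P ∈ rowStochastic R ι) {δ : R}
    (hδ : ∀ i j, δ ≤ P i j) {v : ι → R} (hv : ∑ i, v i = 0) :
    ∑ j, |(v ᵥ* P) j| ≤ (1 - Fintype.card ι * δ) * ∑ i, |v i| := by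
  have hconst : v ᵥ* (Matrix.of fun _ _ => δ : Matrix ι ι R) = 0 := by
    funext j
    simp [vecMul, dotProduct, ← sum_mul, hv]
  rw [← sub_zero (v ᵥ* P), ← hconst, ← vecMul_sub]
  refine sum_abs_vecMul_le_of_sum_row_eq (fun i j => sub_nonneg.2 (hδ i j)) (fun i => ?_) v
  simp [sum_sub_distrib, sum_row_of_mem_rowStochastic hP]

end AbsSum

theorem tendsto_zero_of_antitone_of_le_mul {f : ℕ → ℝ} (hf : Antitone f) (hf0 : ∀ m, 0 ≤ f m)
    {c : ℝ} (hc : c < 1) {N : ℕ} (hfc : ∀ m, f (m + N) ≤ c * f m) :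
    Tendsto f atTop (𝓝 0) := by
  have hlim := tendsto_atTop_ciInf hf ⟨0, by rintro _ ⟨m, rfl⟩; exact hf0 m⟩
  have hL0 : 0 ≤ ⨅ m, f m := ge_of_tendsto' hlim hf0
  have hLc : ⨅ m, f m ≤ c * ⨅ m, f m :=
    le_of_tendsto_of_tendsto' ((tendsto_add_atTop_iff_nat N).2 hlim) (hlim.const_mul c) hfc
  rwa [show ⨅ m, f m = 0 by nlinarith] at hlim

section Ergodic

variable {ι : Type*} [Fintype ι] [DecidableEq ι] {A : Matrix ι ι ℝ}

theorem tendsto_sum_abs_vecMul_pow [Nonempty ι] (hA : A ∈ rowStochastic ℝ ι)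
    (hprim : A.IsPrimitive) {v : ι → ℝ} (hv : ∑ i, v i = 0) :
    Tendsto (fun m => ∑ j, |(v ᵥ* A ^ m) j|) atTop (𝓝 0) := by
  obtain ⟨-, N, -, hN⟩ := hprim
  obtain ⟨p, -, hp⟩ := exists_min_image univ (fun p : ι × ι => (A ^ N) p.1 p.2) univ_nonempty
  set δ := (A ^ N) p.1 p.2
  have hδ : ∀ i j, δ ≤ (A ^ N) i j := fun i j => hp (i, j) (mem_univ _)
  have hc : 1 - Fintype.card ι * δ < 1 :=
    sub_lt_self 1 (mul_pos (Nat.cast_pos.2 Fintype.card_pos) (hN _ _))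
  refine tendsto_zero_of_antitone_of_le_mul ?_ (fun m => sum_nonneg fun j _ => abs_nonneg _) hc
    (N := N) fun m => ?_
  · refine antitone_nat_of_succ_le fun m => ?_
    rw [pow_succ, ← vecMul_vecMul]
    exact sum_abs_vecMul_le hA _
  · rw [pow_add, ← vecMul_vecMul]
    exact sum_abs_vecMul_le_of_le (pow_mem hA N) hδ
      (by rw [sum_vecMul_of_mem_rowStochastic (pow_mem hA m), hv])

theorem vecMul_pow_eq_self {π : ι → ℝ} (hinv : π ᵥ* A = π) (m : ℕ) : π ᵥ* A ^ m = π := by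
  induction m with
  | zero => simp
  | succ m ih => rw [pow_succ, ← vecMul_vecMul, ih, hinv]

theorem tendsto_pow_of_isPrimitive (hA : A ∈ rowStochastic ℝ ι) (hprim : A.IsPrimitive)
    {π : ι → ℝ} (hπ : ∑ i, π i = 1) (hinv : π ᵥ* A = π) :
    Tendsto (fun k => A ^ k) atTop (𝓝 (vecMulVec (fun _ => 1) π)) := by
  have : Nonempty ι := univ_nonempty_iff.mp (nonempty_of_sum_ne_zero (hπ.trans_ne one_ne_zero))
  refine tendsto_pi_nhds.2 fun i => tendsto_pi_nhds.2 fun j => ?_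
  set v : ι → ℝ := Pi.single i 1 - π
  have hrow : ∀ m, (A ^ m) i j = (v ᵥ* A ^ m) j + π j := fun m => by
    rw [sub_vecMul, vecMul_pow_eq_self hinv, single_one_vecMul]
    simp
  have hv : Tendsto (fun m => (v ᵥ* A ^ m) j) atTop (𝓝 0) :=
    squeeze_zero_norm (fun m => single_le_sum (f := fun j => |(v ᵥ* A ^ m) j|)
      (fun _ _ => abs_nonneg _) (mem_univ j))
      (tendsto_sum_abs_vecMul_pow hA hprim (by simp [v, sum_sub_distrib, hπ]))
  simpa [hrow, vecMulVec_apply] using hv.add_const (π j)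

end Ergodic

theorem stmt18 {n : ℕ} (hn : 0 < n) (A : Matrix (Fin n) (Fin n) ℝ)
    (hA0 : ∀ i j, 0 ≤ A i j) (hA1 : ∀ i, ∑ j, A i j = 1)
    (pv : Fin n → ℝ) (hpv : ∀ i, 0 < pv i) (hpv1 : ∑ i, pv i = 1)
    (hinv : pv ᵥ* A = pv)
    (hnotrans : ∀ i j, (∃ m, 0 < (A ^ m) i j) → ∃ m, 0 < (A ^ m) j i)
    (hdet : (1 - zeonSq A).det ≠ 0) :
    (∀ i j, ∃ m, 0 < (A ^ m) i j) ∧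
      (∀ d : ℕ, (∀ m, 0 < m → (∃ i, 0 < (A ^ m) i i) → d ∣ m) → d = 1) ∧
      Filter.Tendsto (fun k => A ^ k) Filter.atTop
        (nhds (Matrix.vecMulVec (fun _ => 1) pv)) := by
  have : Nonempty (Fin n) := ⟨⟨0, hn⟩⟩
  have hirr := exists_pow_apply_pos_of_det_ne_zero hA0 hpv hinv hnotrans hdet
  have haper := aperiodic_of_det_ne_zero hA0 hpv hinv hirr hdet
  exact ⟨hirr, haper, tendsto_pow_of_isPrimitive (mem_rowStochastic_iff_sum.2 ⟨hA0, hA1⟩)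
    (isPrimitive_of_aperiodic hA0 hirr haper) hpv1 hinv⟩
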